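/- Fix integers T ≥ 1 and n ≥ 1, matrices A_t ∈ ℝ^{n×n} and symmetric positive definite W_t (t = 0,…,T−1), a symmetric positive definite P_0, and symmetric positive semidefinite Θ_t and reals D_t > 0 (t = 1,…,T). Then the infimum of the max-det objective J(Π_1,…,Π_T) = −Σ_{t=1}^{T} ½ log det Π_t + c over the max-det feasible set F is finite and is attained by some feasible tuple (P_1,…,P_T, Π_1,…,Π_T) ∈ F. -/

import Mathlib

/-!
Every feasible point satisfies `0 ≺ Π_t ⪯ P_t ⪯ B_t`, where `B_t` is the open-loop covariance
`B_0 = P₀`, `B_{t+1} = A_t B_t A_tᵀ + W_t`; so, once the irrelevant times are cut off, the feasible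
points lie in a compact box. Minimising `J` is maximising the continuous function `∏_t det Π_t`.
On the closed relaxation `Π_t ⪰ 0` of the feasible set, the superlevel set of this product at the
value of one feasible point is compact and still forces `det Π_t > 0`, i.e. `Π_t ≻ 0`; so a
maximiser there is a maximiser over the feasible set. A feasible point is `P_t = ε I`,
`Π_t = ε I / 2` (`Π_T = ε I`) for small `ε > 0`.
-/

open Matrix

/-- The max-det feasible set `F`. -/
def maxdetFeasible (n T : ℕ) (A W Θ : ℕ → Matrix (Fin n) (Fin n) ℝ)
    (P₀ : Matrix (Fin n) (Fin n) ℝ) (D : ℕ → ℝ) :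
    Set ((ℕ → Matrix (Fin n) (Fin n) ℝ) × (ℕ → Matrix (Fin n) (Fin n) ℝ)) :=
  {PQ | PQ.1 0 = P₀ ∧
    (∀ t, 1 ≤ t → t ≤ T → (PQ.2 t).PosDef) ∧
    (∀ t, t < T → (A t * PQ.1 t * (A t)ᵀ + W t - PQ.1 (t + 1)).PosSemidef) ∧
    (∀ t, 1 ≤ t → t < T →
      (fromBlocks (PQ.1 t - PQ.2 t) (PQ.1 t * (A t)ᵀ) (A t * PQ.1 t)
        (W t + A t * PQ.1 t * (A t)ᵀ)).PosSemidef) ∧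
    (∀ t, 1 ≤ t → t ≤ T → (Θ t * PQ.1 t).trace ≤ D t) ∧
    PQ.1 T = PQ.2 T}

/-- The constant `c = ½ log det (A 0 P₀ (A 0)ᵀ + W 0) + Σ_{t=1}^{T−1} ½ log det (W t)`. -/
noncomputable def maxdetConst (n T : ℕ) (A W : ℕ → Matrix (Fin n) (Fin n) ℝ)
    (P₀ : Matrix (Fin n) (Fin n) ℝ) : ℝ :=
  (1 / 2) * Real.log (A 0 * P₀ * (A 0)ᵀ + W 0).det +
    ∑ t ∈ Finset.Ico 1 T, (1 / 2) * Real.log (W t).det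

/-- The max-det objective `J(Π) = −Σ_{t=1}^{T} ½ log det (Π t) + c`. -/
noncomputable def maxdetObj (n T : ℕ) (A W : ℕ → Matrix (Fin n) (Fin n) ℝ)
    (P₀ : Matrix (Fin n) (Fin n) ℝ) (Q : ℕ → Matrix (Fin n) (Fin n) ℝ) : ℝ :=
  -∑ t ∈ Finset.Icc 1 T, (1 / 2) * Real.log (Q t).det + maxdetConst n T A W P₀

open Filter Topology
open scoped MatrixOrder

namespace Matrix

section

variable {ι κ : Type*}

lemma isCompact_setOf_abs_apply_le (r : ℝ) :
    IsCompact {X : Matrix ι κ ℝ | ∀ i j, |X i j| ≤ r} := by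
  have h : {X : Matrix ι κ ℝ | ∀ i j, |X i j| ≤ r} =
      Set.univ.pi fun _ => Set.univ.pi fun _ => Set.Icc (-r) r := by
    ext X
    simp only [Set.mem_ofPred_eq, abs_le]
    exact ⟨fun h i _ j _ => h i j, fun h i j => h i trivial j trivial⟩
  rw [h]
  exact isCompact_univ_pi fun _ => isCompact_univ_pi fun _ => isCompact_Icc

variable [Fintype ι]

lemma mul_mul_transpose_le_mul_mul_transpose {X Y : Matrix ι ι ℝ} (h : X ≤ Y) [Fintype κ]
    (L : Matrix κ ι ℝ) : L * X * Lᵀ ≤ L * Y * Lᵀ := by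
  rw [le_iff, ← Matrix.sub_mul, ← Matrix.mul_sub]
  simpa [conjTranspose_eq_transpose_of_trivial] using (le_iff.1 h).mul_mul_conjTranspose_same L

lemma mul_mul_transpose_nonneg {X : Matrix ι ι ℝ} (h : 0 ≤ X) [Fintype κ] (L : Matrix κ ι ℝ) :
    0 ≤ L * X * Lᵀ := by
  simpa using mul_mul_transpose_le_mul_mul_transpose h L

lemma isClosed_setOf_posSemidef : IsClosed {X : Matrix ι ι ℝ | X.PosSemidef} := by
  have h : {X : Matrix ι ι ℝ | X.PosSemidef} =
      {X | Xᴴ = X} ∩ ⋂ v : ι → ℝ, {X | 0 ≤ star v ⬝ᵥ X *ᵥ v} := by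
    ext X
    simp only [Set.mem_ofPred_eq, Set.mem_inter_iff, Set.mem_iInter]
    exact ⟨fun h => ⟨h.1, h.dotProduct_mulVec_nonneg⟩,
      fun h => PosSemidef.of_dotProduct_mulVec_nonneg h.1 h.2⟩
  rw [h]
  exact (isClosed_eq continuous_id.matrix_conjTranspose continuous_id).inter
    (isClosed_iInter fun v => isClosed_le continuous_const
      (continuous_const.dotProduct (continuous_id.matrix_mulVec continuous_const)))

lemma PosSemidef.abs_apply_le_trace {X : Matrix ι ι ℝ} (hX : X.PosSemidef) (i j : ι) :
    |X i j| ≤ X.trace := by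
  classical
  have quadratic_form (s : ℝ) : 0 ≤ X i i + s * (X i j + X j i) + s ^ 2 * X j j := by
    have := hX.dotProduct_mulVec_nonneg (Pi.single i 1 + Pi.single j s)
    obtain rfl | _ := eq_or_ne i j <;> simp [Matrix.mulVec_add, Matrix.mulVec_single] at this ⊢ <;>
      nlinarith
  have hsymm : X j i = X i j := hX.isHermitian.apply i j
  have diag_le (k : ι) : X k k ≤ X.trace :=
    Finset.single_le_sum (f := fun k => X k k) (fun _ _ => hX.diag_nonneg) (Finset.mem_univ k)
  rw [abs_le]
  constructor <;> nlinarith [quadratic_form 1, quadratic_form (-1), diag_le i, diag_le j]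

lemma abs_apply_le_trace_of_le {X Y : Matrix ι ι ℝ} (hX : 0 ≤ X) (hXY : X ≤ Y) (i j : ι) :
    |X i j| ≤ Y.trace := by
  have := (le_iff.1 hXY).trace_nonneg
  rw [trace_sub] at this
  linarith [hX.posSemidef.abs_apply_le_trace i j]

variable [DecidableEq ι]

lemma PosDef.exists_pos_smul_one_le {W : Matrix ι ι ℝ} (hW : W.PosDef) [Nonempty ι] :
    ∃ r > (0 : ℝ), r • 1 ≤ W := by
  simp_rw [← Algebra.algebraMap_eq_smul_one]
  exact (CFC.exists_pos_algebraMap_le_iff hW.isHermitian.isSelfAdjoint).2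
    fun _ hx => (isStrictlyPositive_iff_posDef.2 hW).spectrum_pos hx

lemma IsHermitian.exists_le_smul_one {S : Matrix ι ι ℝ} (hS : S.IsHermitian) :
    ∃ c > (0 : ℝ), S ≤ c • 1 := by
  obtain ⟨c, hc⟩ := (hS.spectrum_real_eq_range_eigenvalues ▸ Set.finite_range _).bddAbove
  refine ⟨max c 1, lt_max_of_lt_right one_pos, ?_⟩
  rw [← Algebra.algebraMap_eq_smul_one]
  exact le_algebraMap_of_spectrum_le (fun x hx => (hc hx).trans (le_max_left _ _))
    hS.isSelfAdjoint

lemma PosDef.eventually_smul_le {W S : Matrix ι ι ℝ} (hW : W.PosDef) (hS : S.IsHermitian) :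
    ∀ᶠ ε in 𝓝[>] (0 : ℝ), ε • S ≤ W := by
  cases isEmpty_or_nonempty ι
  · exact Eventually.of_forall fun _ => (Subsingleton.elim _ _).le
  obtain ⟨r, hr, hrW⟩ := hW.exists_pos_smul_one_le
  obtain ⟨c, hc, hSc⟩ := hS.exists_le_smul_one
  filter_upwards [Ioo_mem_nhdsGT (div_pos hr hc)] with ε ⟨hε, hεr⟩
  calc ε • S ≤ ε • c • (1 : Matrix ι ι ℝ) := smul_le_smul_of_nonneg_left hSc hε.le
    _ = (ε * c) • 1 := smul_smul ε c 1
    _ ≤ r • 1 := smul_le_smul_of_nonneg_right ((lt_div_iff₀ hc).1 hεr).le zero_le_one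
    _ ≤ W := hrW

lemma posSemidef_fromBlocks_of_le [Fintype κ] [DecidableEq κ] {P Q : Matrix ι ι ℝ}
    {W : Matrix κ κ ℝ} {A : Matrix κ ι ℝ} (hP : 0 ≤ P) (hQ : Q ≤ (2⁻¹ : ℝ) • P)
    (hW : A * P * Aᵀ ≤ W) :
    (fromBlocks (P - Q) (P * Aᵀ) (A * P) (W + A * P * Aᵀ)).PosSemidef := by
  let L₁ : Matrix (ι ⊕ κ) ι ℝ := Matrix.fromRows 1 0
  let L : Matrix (ι ⊕ κ) ι ℝ := Matrix.fromRows 1 ((2 : ℝ) • A)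
  let L₂ : Matrix (ι ⊕ κ) κ ℝ := Matrix.fromRows 0 1
  have decomposition : fromBlocks (P - Q) (P * Aᵀ) (A * P) (W + A * P * Aᵀ) =
      L₁ * ((2⁻¹ : ℝ) • P - Q) * L₁ᵀ + L * ((2⁻¹ : ℝ) • P) * Lᵀ +
        L₂ * (W - A * P * Aᵀ) * L₂ᵀ := by
    simp only [L₁, L, L₂, Matrix.mul_assoc, transpose_fromRows, mul_fromCols, fromRows_mul,
      fromCols_fromRows_eq_fromBlocks, fromBlocks_add]
    congr 1 <;> simp [Matrix.smul_mul, Matrix.mul_smul, smul_smul] <;> module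
  rw [decomposition, ← nonneg_iff_posSemidef]
  refine add_nonneg (add_nonneg ?_ ?_) ?_ <;> apply mul_mul_transpose_nonneg
  · exact sub_nonneg.2 hQ
  · exact (hP.posSemidef.smul (by norm_num)).nonneg
  · exact sub_nonneg.2 hW

end

end Matrix

lemma IsCompact.exists_isMaxOn_of_forall_exists_le {X : Type*} [TopologicalSpace X]
    {F K : Set X} {f : X → ℝ} (hK : IsCompact K) (hK₀ : K.Nonempty) (hKF : K ⊆ F)
    (hf : ContinuousOn f K) (hdom : ∀ y ∈ F, ∃ y' ∈ K, f y ≤ f y') :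
    ∃ z ∈ F, IsMaxOn f F z := by
  obtain ⟨z, hzK, hz⟩ := hK.exists_isMaxOn hK₀ hf
  refine ⟨z, hKF hzK, fun y hy => ?_⟩
  obtain ⟨y', hy'K, hyy'⟩ := hdom y hy
  exact hyy'.trans (hz hy'K)

namespace MaxDet

variable {n T : ℕ} {A W Θ : ℕ → Matrix (Fin n) (Fin n) ℝ} {P₀ : Matrix (Fin n) (Fin n) ℝ}
  {D : ℕ → ℝ} {x : (ℕ → Matrix (Fin n) (Fin n) ℝ) × (ℕ → Matrix (Fin n) (Fin n) ℝ)}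

def openLoopCov (A W : ℕ → Matrix (Fin n) (Fin n) ℝ) (P₀ : Matrix (Fin n) (Fin n) ℝ) :
    ℕ → Matrix (Fin n) (Fin n) ℝ
  | 0 => P₀
  | t + 1 => A t * openLoopCov A W P₀ t * (A t)ᵀ + W t

lemma snd_le_fst (hx : x ∈ maxdetFeasible n T A W Θ P₀ D) {t : ℕ} (h₁ : 1 ≤ t) (hT : t ≤ T) :
    x.2 t ≤ x.1 t := by
  rcases hT.lt_or_eq with hT | rfl
  · exact le_iff.2 ((hx.2.2.2.1 t h₁ hT).submatrix Sum.inl)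
  · exact hx.2.2.2.2.2 ▸ le_rfl

lemma fst_nonneg (hP₀ : P₀.PosDef) (hx : x ∈ maxdetFeasible n T A W Θ P₀ D) {t : ℕ}
    (hT : t ≤ T) : 0 ≤ x.1 t := by
  rcases Nat.eq_zero_or_pos t with rfl | h₁
  · exact hx.1 ▸ hP₀.posSemidef.nonneg
  · exact (hx.2.1 t h₁ hT).posSemidef.nonneg.trans (snd_le_fst hx h₁ hT)

lemma fst_le_openLoopCov (hx : x ∈ maxdetFeasible n T A W Θ P₀ D) :
    ∀ t ≤ T, x.1 t ≤ openLoopCov A W P₀ t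
  | 0, _ => hx.1.le
  | t + 1, hT => calc
      x.1 (t + 1) ≤ A t * x.1 t * (A t)ᵀ + W t := le_iff.2 (hx.2.2.1 t hT)
      _ ≤ openLoopCov A W P₀ (t + 1) := add_le_add_left
        (mul_mul_transpose_le_mul_mul_transpose (fst_le_openLoopCov hx t (by omega)) _) _

lemma abs_fst_apply_le (hP₀ : P₀.PosDef) (hx : x ∈ maxdetFeasible n T A W Θ P₀ D) {t : ℕ}
    (hT : t ≤ T) (i j : Fin n) : |x.1 t i j| ≤ (openLoopCov A W P₀ t).trace :=
  abs_apply_le_trace_of_le (fst_nonneg hP₀ hx hT) (fst_le_openLoopCov hx t hT) i j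

lemma abs_snd_apply_le (hx : x ∈ maxdetFeasible n T A W Θ P₀ D) {t : ℕ} (h₁ : 1 ≤ t)
    (hT : t ≤ T) (i j : Fin n) : |x.2 t i j| ≤ (openLoopCov A W P₀ t).trace :=
  abs_apply_le_trace_of_le (hx.2.1 t h₁ hT).posSemidef.nonneg
    ((snd_le_fst hx h₁ hT).trans (fst_le_openLoopCov hx t hT)) i j

lemma openLoopCov_trace_nonneg (hW : ∀ t, t < T → (W t).PosDef) (hP₀ : P₀.PosDef) :
    ∀ t ≤ T, 0 ≤ (openLoopCov A W P₀ t).trace := by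
  suffices h : ∀ t ≤ T, 0 ≤ openLoopCov A W P₀ t from
    fun t hT => (h t hT).posSemidef.trace_nonneg
  intro t
  induction t with
  | zero => exact fun _ => hP₀.posSemidef.nonneg
  | succ t ih =>
    exact fun hT => add_nonneg (mul_mul_transpose_nonneg (ih (by omega)) _)
      (hW t (by omega)).posSemidef.nonneg

def detProd (T : ℕ) (Q : ℕ → Matrix (Fin n) (Fin n) ℝ) : ℝ :=
  ∏ t ∈ Finset.Icc 1 T, (Q t).det

lemma continuous_detProd : Continuous (detProd (n := n) T) :=
  continuous_finsetProd _ fun t _ => (continuous_apply t).matrix_det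

lemma detProd_pos (hx : x ∈ maxdetFeasible n T A W Θ P₀ D) : 0 < detProd T x.2 :=
  Finset.prod_pos fun t ht => (hx.2.1 t (Finset.mem_Icc.1 ht).1 (Finset.mem_Icc.1 ht).2).det_pos

lemma maxdetObj_eq (hx : x ∈ maxdetFeasible n T A W Θ P₀ D) :
    maxdetObj n T A W P₀ x.2 = -(1 / 2) * Real.log (detProd T x.2) + maxdetConst n T A W P₀ := by
  rw [maxdetObj, detProd, Real.log_prod fun t ht =>
    (hx.2.1 t (Finset.mem_Icc.1 ht).1 (Finset.mem_Icc.1 ht).2).det_pos.ne', neg_mul, Finset.mul_sum]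

/-- `maxdetFeasible` with `Π_t ≻ 0` relaxed to `Π_t ⪰ 0`, which makes it closed. -/
def maxdetRelaxed (n T : ℕ) (A W Θ : ℕ → Matrix (Fin n) (Fin n) ℝ)
    (P₀ : Matrix (Fin n) (Fin n) ℝ) (D : ℕ → ℝ) :
    Set ((ℕ → Matrix (Fin n) (Fin n) ℝ) × (ℕ → Matrix (Fin n) (Fin n) ℝ)) :=
  {PQ | PQ.1 0 = P₀ ∧
    (∀ t, 1 ≤ t → t ≤ T → (PQ.2 t).PosSemidef) ∧
    (∀ t, t < T → (A t * PQ.1 t * (A t)ᵀ + W t - PQ.1 (t + 1)).PosSemidef) ∧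
    (∀ t, 1 ≤ t → t < T →
      (fromBlocks (PQ.1 t - PQ.2 t) (PQ.1 t * (A t)ᵀ) (A t * PQ.1 t)
        (W t + A t * PQ.1 t * (A t)ᵀ)).PosSemidef) ∧
    (∀ t, 1 ≤ t → t ≤ T → (Θ t * PQ.1 t).trace ≤ D t) ∧
    PQ.1 T = PQ.2 T}

lemma isClosed_maxdetRelaxed : IsClosed (maxdetRelaxed n T A W Θ P₀ D) := by
  simp only [maxdetRelaxed, Set.ofPred_and, Set.ofPred_forall]
  refine (isClosed_eq (by fun_prop) continuous_const).inter <| .inter ?_ <| .inter ?_ <|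
    .inter ?_ <| .inter ?_ (isClosed_eq (by fun_prop) (by fun_prop))
  all_goals repeat refine isClosed_iInter fun _ => ?_
  iterate 3 exact isClosed_setOf_posSemidef.preimage (by fun_prop)
  exact isClosed_le (by fun_prop) continuous_const

lemma maxdetFeasible_subset_maxdetRelaxed :
    maxdetFeasible n T A W Θ P₀ D ⊆ maxdetRelaxed n T A W Θ P₀ D :=
  fun _ ⟨h₀, hQ, h⟩ => ⟨h₀, fun t h₁ hT => (hQ t h₁ hT).posSemidef, h⟩

lemma mem_maxdetFeasible_of_detProd_pos (hx : x ∈ maxdetRelaxed n T A W Θ P₀ D)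
    (hdet : 0 < detProd T x.2) : x ∈ maxdetFeasible n T A W Θ P₀ D := by
  obtain ⟨h₀, hQ, h⟩ := hx
  refine ⟨h₀, fun t h₁ hT => (hQ t h₁ hT).posDef_iff_det_ne_zero.2 ?_, h⟩
  exact Finset.prod_ne_zero_iff.1 hdet.ne' t (Finset.mem_Icc.2 ⟨h₁, hT⟩)

def truncate (T : ℕ) (x : (ℕ → Matrix (Fin n) (Fin n) ℝ) × (ℕ → Matrix (Fin n) (Fin n) ℝ)) :
    (ℕ → Matrix (Fin n) (Fin n) ℝ) × (ℕ → Matrix (Fin n) (Fin n) ℝ) :=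
  (fun t => if t ≤ T then x.1 t else 0, fun t => if 1 ≤ t ∧ t ≤ T then x.2 t else 0)

lemma truncate_mem (hT : 1 ≤ T) (hx : x ∈ maxdetFeasible n T A W Θ P₀ D) :
    truncate T x ∈ maxdetFeasible n T A W Θ P₀ D := by
  obtain ⟨h₀, hQ, hstep, hblock, htrace, hend⟩ := hx
  have fst_eq {t : ℕ} (h : t ≤ T) : (truncate T x).1 t = x.1 t := if_pos h
  have snd_eq {t : ℕ} (h₁ : 1 ≤ t) (h : t ≤ T) : (truncate T x).2 t = x.2 t := if_pos ⟨h₁, h⟩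
  refine ⟨?_, fun t h₁ hT' => ?_, fun t ht => ?_, fun t h₁ ht => ?_, fun t h₁ hT' => ?_, ?_⟩
  · rw [fst_eq T.zero_le, h₀]
  · rw [snd_eq h₁ hT']
    exact hQ t h₁ hT'
  · rw [fst_eq ht.le, fst_eq ht]
    exact hstep t ht
  · rw [fst_eq ht.le, snd_eq h₁ ht.le]
    exact hblock t h₁ ht
  · rw [fst_eq hT']
    exact htrace t h₁ hT'
  · rw [fst_eq le_rfl, snd_eq hT le_rfl, hend]

lemma detProd_truncate : detProd T (truncate T x).2 = detProd T x.2 :=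
  Finset.prod_congr rfl fun t ht => by simp [truncate, Finset.mem_Icc.1 ht]

def entryBox (r : ℕ → ℝ) : Set (ℕ → Matrix (Fin n) (Fin n) ℝ) :=
  Set.univ.pi fun t => {X | ∀ i j, |X i j| ≤ r t}

lemma isCompact_entryBox (r : ℕ → ℝ) : IsCompact (entryBox (n := n) r) :=
  isCompact_univ_pi fun _ => isCompact_setOf_abs_apply_le _

lemma truncate_mem_entryBox (hW : ∀ t, t < T → (W t).PosDef) (hP₀ : P₀.PosDef)
    (hx : x ∈ maxdetFeasible n T A W Θ P₀ D) :
    truncate T x ∈ entryBox (fun t => if t ≤ T then (openLoopCov A W P₀ t).trace else 0) ×ˢ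
      entryBox (fun t => if t ≤ T then (openLoopCov A W P₀ t).trace else 0) := by
  refine ⟨fun t _ i j => ?_, fun t _ i j => ?_⟩ <;> dsimp only [truncate]
  · split_ifs with hT
    · exact abs_fst_apply_le hP₀ hx hT i j
    · simp
  · split_ifs with h hT hT
    · exact abs_snd_apply_le hx h.1 h.2 i j
    · exact absurd h.2 hT
    · simpa using openLoopCov_trace_nonneg hW hP₀ t hT
    · simp

noncomputable def scalarPoint (T : ℕ) (P₀ : Matrix (Fin n) (Fin n) ℝ) (ε : ℝ) :
    (ℕ → Matrix (Fin n) (Fin n) ℝ) × (ℕ → Matrix (Fin n) (Fin n) ℝ) :=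
  (fun t => if t = 0 then P₀ else ε • 1, fun t => if t < T then (ε / 2) • 1 else ε • 1)

lemma scalarPoint_mem (hT : 1 ≤ T) (hP₀ : P₀.PosDef) {ε : ℝ} (hε : 0 < ε)
    (hW : ∀ t ∈ Finset.range T, ε • 1 ≤ W t ∧ ε • (A t * (A t)ᵀ) ≤ W t)
    (hΘ : ∀ t ∈ Finset.Icc 1 T, ε * (Θ t).trace ≤ D t) :
    scalarPoint T P₀ ε ∈ maxdetFeasible n T A W Θ P₀ D := by
  have hT₀ : T ≠ 0 := by omega
  have fst_nonneg (t : ℕ) : 0 ≤ (scalarPoint T P₀ ε).1 t := by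
    dsimp only [scalarPoint]
    split_ifs
    exacts [hP₀.posSemidef.nonneg, (PosSemidef.one.smul hε.le).nonneg]
  refine ⟨rfl, fun t h₁ hT' => ?_, fun t ht => ?_, fun t h₁ ht => ?_, fun t h₁ hT' => ?_, ?_⟩
  · dsimp only [scalarPoint]
    split_ifs
    exacts [PosDef.one.smul (half_pos hε), PosDef.one.smul hε]
  · refine le_iff.1 ?_
    calc (scalarPoint T P₀ ε).1 (t + 1) = ε • 1 := by simp [scalarPoint]
      _ ≤ W t := (hW t (Finset.mem_range.2 ht)).1
      _ ≤ _ := le_add_of_nonneg_left (mul_mul_transpose_nonneg (fst_nonneg t) _)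
  · rw [show (scalarPoint T P₀ ε).1 t = ε • 1 by simp [scalarPoint]; omega,
      show (scalarPoint T P₀ ε).2 t = (ε / 2) • 1 by simp [scalarPoint, ht]]
    refine posSemidef_fromBlocks_of_le (PosSemidef.one.smul hε.le).nonneg
      (by rw [smul_smul, div_eq_inv_mul]) ?_
    simpa [Matrix.mul_smul, Matrix.smul_mul] using (hW t (Finset.mem_range.2 ht)).2
  · rw [show (scalarPoint T P₀ ε).1 t = ε • 1 by simp [scalarPoint]; omega, Matrix.mul_smul,
      Matrix.mul_one, trace_smul, smul_eq_mul]
    exact hΘ t (Finset.mem_Icc.2 ⟨h₁, hT'⟩)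
  · simp [scalarPoint, hT₀]

lemma maxdetFeasible_nonempty (hT : 1 ≤ T) (hW : ∀ t, t < T → (W t).PosDef) (hP₀ : P₀.PosDef)
    (hD : ∀ t, 1 ≤ t → t ≤ T → 0 < D t) : (maxdetFeasible n T A W Θ P₀ D).Nonempty := by
  have hε : ∀ᶠ ε in 𝓝[>] (0 : ℝ), 0 < ε ∧
      (∀ t ∈ Finset.range T, ε • (1 : Matrix (Fin n) (Fin n) ℝ) ≤ W t ∧
        ε • (A t * (A t)ᵀ) ≤ W t) ∧
      ∀ t ∈ Finset.Icc 1 T, ε * (Θ t).trace ≤ D t := by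
    refine eventually_mem_nhdsWithin.and (.and ?_ ?_) <;> rw [Finset.eventually_all] <;>
      intro t ht
    · have hWt := hW t (Finset.mem_range.1 ht)
      refine (hWt.eventually_smul_le isHermitian_one).and (hWt.eventually_smul_le ?_)
      simpa [conjTranspose_eq_transpose_of_trivial] using isHermitian_mul_conjTranspose_self (A t)
    · have hDt := hD t (Finset.mem_Icc.1 ht).1 (Finset.mem_Icc.1 ht).2
      exact ((continuous_mul_const _).tendsto' 0 0 (zero_mul _)).mono_left nhdsWithin_le_nhds
        |>.eventually (eventually_le_nhds hDt)
  obtain ⟨ε, hε, hεW, hεΘ⟩ := hε.exists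
  exact ⟨_, scalarPoint_mem hT hP₀ hε hεW hεΘ⟩

lemma exists_isMaxOn_detProd (hT : 1 ≤ T) (hW : ∀ t, t < T → (W t).PosDef) (hP₀ : P₀.PosDef)
    {x₀ : (ℕ → Matrix (Fin n) (Fin n) ℝ) × (ℕ → Matrix (Fin n) (Fin n) ℝ)}
    (hx₀ : x₀ ∈ maxdetFeasible n T A W Θ P₀ D) :
    ∃ z ∈ maxdetFeasible n T A W Θ P₀ D,
      IsMaxOn (fun x => detProd T x.2) (maxdetFeasible n T A W Θ P₀ D) z := by
  let box := entryBox (n := n) fun t => if t ≤ T then (openLoopCov A W P₀ t).trace else 0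
  let K := maxdetRelaxed n T A W Θ P₀ D ∩ {x | detProd T x₀.2 ≤ detProd T x.2} ∩ box ×ˢ box
  have hdet : Continuous fun x : (ℕ → Matrix (Fin n) (Fin n) ℝ) ×
      (ℕ → Matrix (Fin n) (Fin n) ℝ) => detProd T x.2 :=
    continuous_detProd.comp continuous_snd
  have truncate_mem_K {y} (hy : y ∈ maxdetFeasible n T A W Θ P₀ D)
      (h : detProd T x₀.2 ≤ detProd T y.2) : truncate T y ∈ K :=
    ⟨⟨maxdetFeasible_subset_maxdetRelaxed (truncate_mem hT hy),
      by rwa [Set.mem_ofPred_eq, detProd_truncate]⟩, truncate_mem_entryBox hW hP₀ hy⟩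
  refine IsCompact.exists_isMaxOn_of_forall_exists_le (K := K)
    (((isCompact_entryBox _).prod (isCompact_entryBox _)).inter_left
      (isClosed_maxdetRelaxed.inter (isClosed_le continuous_const hdet)))
    ⟨_, truncate_mem_K hx₀ le_rfl⟩
    (fun x hx => mem_maxdetFeasible_of_detProd_pos hx.1.1 ((detProd_pos hx₀).trans_le hx.1.2))
    hdet.continuousOn fun y hy => ?_
  by_cases h : detProd T x₀.2 ≤ detProd T y.2
  · exact ⟨_, truncate_mem_K hy h, detProd_truncate.ge⟩
  · exact ⟨_, truncate_mem_K hx₀ le_rfl, detProd_truncate.trans_ge (not_le.1 h).le⟩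

end MaxDet

theorem maxdet_inf_attained_general (n T : ℕ) (hT : 1 ≤ T)
    (A W Θ : ℕ → Matrix (Fin n) (Fin n) ℝ) (P₀ : Matrix (Fin n) (Fin n) ℝ)
    (D : ℕ → ℝ)
    (hW : ∀ t, t < T → (W t).PosDef) (hP₀ : P₀.PosDef)
    (hD : ∀ t, 1 ≤ t → t ≤ T → 0 < D t) :
    ∃ PQ ∈ maxdetFeasible n T A W Θ P₀ D,
      IsLeast ((fun PQ' => maxdetObj n T A W P₀ PQ'.2) ''
          maxdetFeasible n T A W Θ P₀ D)
        (maxdetObj n T A W P₀ PQ.2) := by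
  obtain ⟨x₀, hx₀⟩ := MaxDet.maxdetFeasible_nonempty hT hW hP₀ hD
  obtain ⟨z, hz, hmax⟩ := MaxDet.exists_isMaxOn_detProd hT hW hP₀ hx₀
  refine ⟨z, hz, ⟨z, hz, rfl⟩, ?_⟩
  rintro _ ⟨y, hy, rfl⟩
  have := Real.log_le_log (MaxDet.detProd_pos hy) (hmax hy)
  simp only [MaxDet.maxdetObj_eq hz, MaxDet.maxdetObj_eq hy]
  linarith

/-- The infimum of the max-det objective over the max-det feasible set
is finite and attained, i.e. the set of attained objective values has a least element. -/
theorem maxdet_inf_attained (n T : ℕ) (hn : 0 < n) (hT : 1 ≤ T)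
    (A W Θ : ℕ → Matrix (Fin n) (Fin n) ℝ) (P₀ : Matrix (Fin n) (Fin n) ℝ)
    (D : ℕ → ℝ)
    (hW : ∀ t, t < T → (W t).PosDef) (hP₀ : P₀.PosDef)
    (hΘ : ∀ t, 1 ≤ t → t ≤ T → (Θ t).PosSemidef)
    (hD : ∀ t, 1 ≤ t → t ≤ T → 0 < D t) :
    ∃ PQ ∈ maxdetFeasible n T A W Θ P₀ D,
      IsLeast ((fun PQ' => maxdetObj n T A W P₀ PQ'.2) ''
          maxdetFeasible n T A W Θ P₀ D)
        (maxdetObj n T A W P₀ PQ.2) :=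
  maxdet_inf_attained_general n T hT A W Θ P₀ D hW hP₀ hD
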